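/- Let (P^n)_{n≥1} be a time consistent family of coherent exchangeable lower previsions on ℒ(𝒳^n), with count distributions Q^n on ℒ(𝒩^n) defined by Q^n(h) := P^n(h∘T^n). Then there is a unique coherent lower prevision S on the linear space 𝒱(Σ_𝒳) of polynomial gambles on the 𝒳-simplex such that for all n ≥ 1, every gamble f on 𝒳^n and every gamble g on 𝒩^n: P^n(f) = S(Mn^n(f|·)) and Q^n(g) = S(CoMn^n(g|·)). -/

import Mathlib

open Finset Filter Topology

/-- A coherent lower prevision on the gambles over a finite nonempty space `Ω`. -/
def LowerPrevCoherent {Ω : Type*} [Fintype Ω] [Nonempty Ω] (P : (Ω → ℝ) → ℝ) : Prop :=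
  (∀ f : Ω → ℝ, sInf (Set.range f) ≤ P f) ∧
  (∀ (f : Ω → ℝ) (l : ℝ), 0 ≤ l → P (fun ω => l * f ω) = l * P f) ∧
  (∀ f g : Ω → ℝ, P f + P g ≤ P (f + g))

/-- A linear prevision on the gambles over a finite nonempty space `Ω`. -/
def LinearPrevision {Ω : Type*} [Fintype Ω] [Nonempty Ω] (P : (Ω → ℝ) → ℝ) : Prop :=
  (∀ f g : Ω → ℝ, P (f + g) = P f + P g) ∧
  (∀ (l : ℝ) (f : Ω → ℝ), P (fun ω => l * f ω) = l * P f) ∧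
  (∀ f : Ω → ℝ, (∀ ω, 0 ≤ f ω) → 0 ≤ P f) ∧
  P (fun _ => 1) = 1

/-- Exchangeability of a lower prevision on gambles on `X^N`:
`P (πf − f) ≥ 0` for every gamble `f` and every permutation `π`. -/
def Exchangeable {X : Type*} {N : ℕ} (P : ((Fin N → X) → ℝ) → ℝ) : Prop :=
  ∀ (f : (Fin N → X) → ℝ) (π : Equiv.Perm (Fin N)),
    0 ≤ P (fun x => f (fun k => x (π k)) - f x)

/-- The set of count vectors `𝒩^n`. -/
abbrev CVec (X : Type*) [Fintype X] (n : ℕ) : Type _ := {m : X → ℕ // ∑ x, m x = n}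

noncomputable instance {X : Type*} [Fintype X] [DecidableEq X] (n : ℕ) : Fintype (CVec X n) := by
  have key : ∀ (m : CVec X n) (x : X), m.1 x < n + 1 := by
    intro m x
    have h1 : m.1 x ≤ ∑ y, m.1 y :=
      Finset.single_le_sum (fun i _ => Nat.zero_le _) (Finset.mem_univ x)
    have h2 := m.2
    omega
  exact Fintype.ofInjective (fun m : CVec X n => fun x => (⟨m.1 x, key m x⟩ : Fin (n+1)))
    (fun a b hab => Subtype.ext (funext fun x => congrArg Fin.val (congrFun hab x)))

instance {X : Type*} [Fintype X] [DecidableEq X] [Nonempty X] (n : ℕ) :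
    Nonempty (CVec X n) :=
  ⟨⟨fun x => if x = Classical.arbitrary X then n else 0, by simp⟩⟩

/-- The counting map `T^n : X^n → 𝒩^n`. -/
def countMap {X : Type*} [Fintype X] [DecidableEq X] (n : ℕ) (z : Fin n → X) : CVec X n :=
  ⟨fun x => (Finset.univ.filter fun k => z k = x).card, by
    have h := Finset.card_eq_sum_card_fiberwise (f := z) (s := Finset.univ) (t := Finset.univ)
      (fun k _ => Finset.mem_univ (z k))
    simpa using h.symm⟩

/-- `ν(m) = n!/∏ₓ mₓ!` for a count vector `m ∈ 𝒩^n`. -/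
def nu {X : Type*} [Fintype X] {n : ℕ} (m : CVec X n) : ℕ :=
  Nat.multinomial Finset.univ m.1

/-- `ν(μ − m)`, which is `0` unless `m ≤ μ` componentwise. -/
def nuSub {X : Type*} [Fintype X] {n k : ℕ} (μ : CVec X (n + k)) (m : CVec X n) : ℕ :=
  if ∀ x, m.1 x ≤ μ.1 x then Nat.multinomial Finset.univ (fun x => μ.1 x - m.1 x) else 0

/-- The multiple hyper-geometric prevision `MuHy^n(f|m) = (1/ν(m)) ∑_{z∈[m]} f(z)`. -/
noncomputable def MuHy {X : Type*} [Fintype X] [DecidableEq X] {n : ℕ}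
    (f : (Fin n → X) → ℝ) (m : CVec X n) : ℝ :=
  (∑ z ∈ Finset.univ.filter fun z : Fin n → X => countMap n z = m, f z) / (nu m : ℝ)

/-- The `X`-simplex `Σ_X`, as a subtype of `X → ℝ`. -/
abbrev SimplexPt (X : Type*) [Fintype X] : Type _ :=
  {θ : X → ℝ // (∀ x, 0 ≤ θ x) ∧ ∑ x, θ x = 1}

/-- The Bernstein basis polynomial `B_m(θ) = ν(m) ∏ₓ θₓ^{mₓ}`. -/
noncomputable def Bern {X : Type*} [Fintype X] {n : ℕ} (m : CVec X n) (θ : X → ℝ) : ℝ :=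
  (nu m : ℝ) * ∏ x, θ x ^ m.1 x

/-- The count multinomial expectation `CoMn^n(g|θ) = ∑_m g(m) B_m(θ)`. -/
noncomputable def CoMn {X : Type*} [Fintype X] [DecidableEq X] {n : ℕ} (g : CVec X n → ℝ) (θ : X → ℝ) : ℝ :=
  ∑ m : CVec X n, g m * Bern m θ

/-- The multinomial expectation `Mn^n(f|θ) = ∑_z f(z) ∏ₓ θₓ^{Tₓ(z)}`. -/
noncomputable def Mn {X : Type*} [Fintype X] [DecidableEq X] {n : ℕ}
    (f : (Fin n → X) → ℝ) (θ : X → ℝ) : ℝ :=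
  ∑ z : Fin n → X, f z * ∏ x, θ x ^ (countMap n z).1 x

/-- `CoMn^n(g|·)` as a function on the simplex. -/
noncomputable def CoMnP {X : Type*} [Fintype X] [DecidableEq X] {n : ℕ} (g : CVec X n → ℝ)
    (θ : SimplexPt X) : ℝ :=
  CoMn g θ.1

/-- `Mn^n(f|·)` as a function on the simplex. -/
noncomputable def MnP {X : Type*} [Fintype X] [DecidableEq X] {n : ℕ}
    (f : (Fin n → X) → ℝ) (θ : SimplexPt X) : ℝ :=
  Mn f θ.1

/-- Polynomial gambles on the simplex: the set `𝒱(Σ_X)`. -/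
def IsPolyGamble {X : Type*} [Fintype X] [DecidableEq X] (p : SimplexPt X → ℝ) : Prop :=
  ∃ n : ℕ, 1 ≤ n ∧ ∃ g : CVec X n → ℝ, p = fun θ => CoMnP g θ

/-- Coherence of a functional on the linear space `𝒱(Σ_X)` of polynomial gambles. -/
def CoherentOnPoly {X : Type*} [Fintype X] [DecidableEq X] (S : (SimplexPt X → ℝ) → ℝ) : Prop :=
  (∀ p, IsPolyGamble p → sInf (Set.range p) ≤ S p) ∧
  (∀ p, IsPolyGamble p → ∀ l : ℝ, 0 ≤ l → S (fun θ => l * p θ) = l * S p) ∧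
  (∀ p q, IsPolyGamble p → IsPolyGamble q → S p + S q ≤ S (p + q))

/-- Cylindrical extension of a gamble on `X^n` to `X^{n+k}`. -/
def cylExt {X : Type*} {n k : ℕ} (f : (Fin n → X) → ℝ) : (Fin (n + k) → X) → ℝ :=
  fun z => f fun i => z (Fin.castLE (Nat.le_add_right n k) i)

/-- Time consistency of a family of lower previsions on the `X^n`. -/
def PTimeConsistent {X : Type*} (P : ∀ n : ℕ, ((Fin n → X) → ℝ) → ℝ) : Prop :=
  ∀ n : ℕ, 1 ≤ n → ∀ (k : ℕ) (f : (Fin n → X) → ℝ), P n f = P (n + k) (cylExt f)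

/-- Time consistency of a family of count lower previsions on the `𝒩^n`. -/
def QTimeConsistent {X : Type*} [Fintype X] [DecidableEq X] (Q : ∀ n : ℕ, (CVec X n → ℝ) → ℝ) : Prop :=
  ∀ n : ℕ, 1 ≤ n → ∀ (k : ℕ) (h : CVec X n → ℝ),
    Q n h = Q (n + k) (fun μ => ∑ m : CVec X n, ((nuSub μ m : ℝ) * (nu m : ℝ) / (nu μ : ℝ)) * h m)

/-- The relative frequency vector `m/n ∈ Σ_X` of a count vector `m ∈ 𝒩^n`, `n ≥ 1`. -/
noncomputable def freqPt {X : Type*} [Fintype X] {n : ℕ} (hn : 0 < n) (m : CVec X n) :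
    SimplexPt X :=
  ⟨fun x => (m.1 x : ℝ) / n,
   fun x => div_nonneg (Nat.cast_nonneg _) (Nat.cast_nonneg _),
   by
    rw [← Finset.sum_div]
    have h : (∑ x, (m.1 x : ℝ)) = (n : ℝ) := by exact_mod_cast m.2
    rw [h]
    exact div_self (Nat.cast_ne_zero.mpr hn.ne')⟩

/-- `ḡ(μ) = ∑_m (ν(m) ν(μ−m) / ν(μ)) g(m)`. -/
noncomputable def gbar {X : Type*} [Fintype X] [DecidableEq X] {n k : ℕ}
    (g : CVec X n → ℝ) (μ : CVec X (n + k)) : ℝ :=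
  ∑ m : CVec X n, ((nu m : ℝ) * (nuSub μ m : ℝ) / (nu μ : ℝ)) * g m

/-
Coherence and exchangeability give `P^n f = P^n (MuHy f ∘ T^n) = Q^n (MuHy f)` with
`CoMn (MuHy f) = Mn f`, and time consistency gives `Q^n g = Q^{n+k} ḡ`, where the hypergeometric
degree elevation `ḡ` has the same Bernstein polynomial as `g`. So `S (CoMn g) := Q^n g` is forced,
and it is well defined and coherent once `inf_Σ CoMn g ≤ Q^n g`: then `CoMn g₁ ≤ CoMn g₂` implies
`Q^N g₁ ≤ Q^N g₂` at a common degree `N`. For this lower bound, the hypergeometric weights of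
`ḡ(μ)` are at most `N^n / N(N-1)⋯(N-n+1)` times the multinomial weights `B_m(μ/N)`, and that
factor tends to `1` as `N = n + k → ∞`.
-/

lemma le_sum_mul_of_le_mul {ι : Type*} [Fintype ι] {w p G : ι → ℝ} {A M : ℝ}
    (hw : ∑ i, w i = 1) (hp : ∑ i, p i = 1) (hwp : ∀ i, w i ≤ A * p i) (hG : ∀ i, G i ≤ M) :
    A * ∑ i, G i * p i - (A - 1) * M ≤ ∑ i, w i * G i := by
  have h : ∑ i, A * p i * (G i - M) ≤ ∑ i, w i * (G i - M) :=
    Finset.sum_le_sum fun i _ => mul_le_mul_of_nonpos_right (hwp i) (sub_nonpos.mpr (hG i))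
  have e₁ : ∑ i, A * p i * (G i - M) = A * ∑ i, G i * p i - A * M * ∑ i, p i := by
    rw [Finset.mul_sum, Finset.mul_sum, ← Finset.sum_sub_distrib]
    exact Finset.sum_congr rfl fun i _ => by ring
  have e₂ : ∑ i, w i * (G i - M) = ∑ i, w i * G i - M * ∑ i, w i := by
    rw [Finset.mul_sum, ← Finset.sum_sub_distrib]
    exact Finset.sum_congr rfl fun i _ => by ring
  rw [e₁, e₂, hp, hw] at h
  linarith

lemma tendsto_pow_div_descFactorial (n : ℕ) :
    Tendsto (fun k : ℕ => ((n + k : ℕ) : ℝ) ^ n / (n + k).descFactorial n) atTop (𝓝 1) := by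
  have h := (isEquivalent_descFactorial n).symm
  rw [Asymptotics.isEquivalent_iff_tendsto_one] at h
  · exact h.comp (tendsto_atTop_mono (fun k => Nat.le_add_left k n) tendsto_id)
  · filter_upwards [eventually_ge_atTop n] with N hN
    exact Nat.cast_ne_zero.mpr (Nat.descFactorial_pos.mpr hN).ne'

section Counting

variable {X : Type*} [Fintype X]

lemma nu_pos {n : ℕ} (m : CVec X n) : 0 < nu m :=
  Nat.multinomial_pos _ _

lemma nu_spec {n : ℕ} (m : CVec X n) : (∏ x, (m.1 x).factorial) * nu m = n.factorial := by
  simpa [nu, m.2] using Nat.multinomial_spec Finset.univ m.1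

variable [DecidableEq X]

lemma countMap_apply {n : ℕ} (z : Fin n → X) (x : X) : (countMap n z).1 x = #{k | z k = x} :=
  rfl

lemma prod_pow_countMap {M : Type*} [CommMonoid M] {n : ℕ} (θ : X → M) (z : Fin n → X) :
    ∏ x, θ x ^ (countMap n z).1 x = ∏ j, θ (z j) := by
  rw [← Finset.prod_fiberwise Finset.univ z (fun j => θ (z j))]
  refine Finset.prod_congr rfl fun x _ => ?_
  rw [Finset.prod_congr rfl fun j hj => by rw [(Finset.mem_filter.mp hj).2], Finset.prod_const]
  rfl

lemma countMap_surjective (n : ℕ) : Function.Surjective (countMap (X := X) n) := by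
  intro m
  obtain ⟨e⟩ : Nonempty (Fin n ≃ Σ x : X, Fin (m.1 x)) :=
    ⟨Fintype.equivOfCardEq (by simp [Fintype.card_sigma, m.2])⟩
  refine ⟨fun k => (e k).1, Subtype.ext (funext fun x => ?_)⟩
  calc (countMap n fun k => (e k).1).1 x = Fintype.card {k // (e k).1 = x} := by
        rw [countMap_apply, Fintype.card_subtype]
    _ = Fintype.card {s : Σ x, Fin (m.1 x) // s.1 = x} :=
        Fintype.card_congr (e.subtypeEquiv fun _ => Iff.rfl)
    _ = m.1 x := by rw [Fintype.card_congr (Equiv.sigmaSubtype x), Fintype.card_fin]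

lemma countMap_comp_perm {n : ℕ} (z : Fin n → X) (σ : Equiv.Perm (Fin n)) :
    countMap n (z ∘ σ) = countMap n z :=
  Subtype.ext <| funext fun x => by
    simp only [countMap_apply]
    exact Finset.card_bij (fun k _ => σ k) (by simp) (fun _ _ _ _ h => σ.injective h)
      (fun b hb => ⟨σ.symm b, by simpa using hb, by simp⟩)

lemma exists_perm_comp_eq_of_countMap_eq {n : ℕ} {z z' : Fin n → X}
    (h : countMap n z' = countMap n z) : ∃ σ : Equiv.Perm (Fin n), z ∘ σ = z' := by
  have F : ∀ x, {k // z' k = x} ≃ {k // z k = x} := fun x =>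
    Fintype.equivOfCardEq <| by
      rw [Fintype.card_subtype, Fintype.card_subtype]
      exact congrArg (fun m : CVec X n => m.1 x) h
  exact ⟨(Equiv.sigmaFiberEquiv z').symm.trans
    ((Equiv.sigmaCongrRight F).trans (Equiv.sigmaFiberEquiv z)),
    funext fun k => ((F (z' k)) ⟨k, rfl⟩).2⟩

lemma card_perm_comp_eq {n : ℕ} {z z' : Fin n → X} (h : countMap n z' = countMap n z) :
    #{σ : Equiv.Perm (Fin n) | z ∘ σ = z'} = ∏ x, ((countMap n z).1 x).factorial := by
  obtain ⟨σ₀, rfl⟩ := exists_perm_comp_eq_of_countMap_eq h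
  rw [← Fintype.card_subtype]
  calc Fintype.card {σ : Equiv.Perm (Fin n) // z ∘ σ = z ∘ σ₀}
      = Fintype.card {τ : Equiv.Perm (Fin n) // z ∘ τ = z} :=
        Fintype.card_congr <| (Equiv.mulRight σ₀⁻¹).subtypeEquiv fun σ => by
          constructor
          · intro hσ
            ext k
            simpa using congrFun hσ (σ₀⁻¹ k)
          · intro hτ
            ext k
            simpa using congrFun hτ (σ₀ k)
    _ = _ := by
      rw [DomMulAct.stabilizer_card]
      exact Finset.prod_congr rfl fun x _ => by rw [Fintype.card_subtype]; rfl

lemma sum_perm_comp {M : Type*} [AddCommMonoid M] {n : ℕ} (z : Fin n → X) (f : (Fin n → X) → M) :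
    ∑ σ : Equiv.Perm (Fin n), f (z ∘ σ)
      = (∏ x, ((countMap n z).1 x).factorial) • ∑ z' with countMap n z' = countMap n z, f z' := by
  have horbit : Finset.univ.image (fun σ : Equiv.Perm (Fin n) => z ∘ σ)
      = ({z' | countMap n z' = countMap n z} : Finset (Fin n → X)) := by
    ext z'
    simp only [Finset.mem_image, Finset.mem_filter, Finset.mem_univ, true_and]
    exact ⟨fun ⟨σ, hσ⟩ => hσ ▸ countMap_comp_perm z σ, exists_perm_comp_eq_of_countMap_eq⟩
  rw [Finset.sum_comp, horbit, Finset.smul_sum]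
  exact Finset.sum_congr rfl fun z' hz' => by rw [card_perm_comp_eq (Finset.mem_filter.mp hz').2]

lemma card_countMap_fiber {n : ℕ} (m : CVec X n) : #{z : Fin n → X | countMap n z = m} = nu m := by
  obtain ⟨z, rfl⟩ := countMap_surjective n m
  have h := sum_perm_comp z (fun _ => 1)
  simp only [Finset.sum_const, Finset.card_univ, Fintype.card_perm, Fintype.card_fin,
    smul_eq_mul, mul_one] at h
  rw [← nu_spec (countMap n z)] at h
  exact (Nat.eq_of_mul_eq_mul_left (Finset.prod_pos fun x _ => Nat.factorial_pos _) h).symm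

lemma countMap_append {n k : ℕ} (z₁ : Fin n → X) (z₂ : Fin k → X) (x : X) :
    (countMap (n + k) (Fin.append z₁ z₂)).1 x = (countMap n z₁).1 x + (countMap k z₂).1 x := by
  simp only [countMap_apply, Finset.card_filter, Fin.sum_univ_add, Fin.append_left,
    Fin.append_right]

end Counting

section Polynomials

variable {X : Type*} [Fintype X] [DecidableEq X]

lemma Mn_one (n : ℕ) (θ : X → ℝ) : Mn (fun _ : Fin n → X => 1) θ = (∑ x, θ x) ^ n := by
  simp only [Mn, one_mul, prod_pow_countMap, Fintype.sum_pow]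

lemma Mn_comp_countMap {n : ℕ} (g : CVec X n → ℝ) (θ : X → ℝ) :
    Mn (fun z => g (countMap n z)) θ = CoMn g θ := by
  rw [Mn, ← Finset.sum_fiberwise' Finset.univ (countMap n)
    (fun m => g m * ∏ x, θ x ^ m.1 x)]
  refine Finset.sum_congr rfl fun m _ => ?_
  rw [Finset.sum_const, card_countMap_fiber, nsmul_eq_mul, Bern]
  ring

lemma sum_Bern (n : ℕ) (θ : X → ℝ) : ∑ m : CVec X n, Bern m θ = (∑ x, θ x) ^ n := by
  simpa [CoMn] using (Mn_comp_countMap (fun _ : CVec X n => 1) θ).symm.trans (Mn_one n θ)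

lemma CoMn_MuHy {n : ℕ} (f : (Fin n → X) → ℝ) (θ : X → ℝ) : CoMn (MuHy f) θ = Mn f θ := by
  rw [Mn, ← Finset.sum_fiberwise Finset.univ (countMap n)]
  refine Finset.sum_congr rfl fun m _ => ?_
  have hν : (nu m : ℝ) ≠ 0 := Nat.cast_ne_zero.mpr (nu_pos _).ne'
  rw [Finset.sum_congr rfl fun z hz => by rw [(Finset.mem_filter.mp hz).2], ← Finset.sum_mul,
    MuHy, Bern]
  field_simp

lemma Mn_cylExt {n : ℕ} (k : ℕ) (f : (Fin n → X) → ℝ) (θ : X → ℝ) :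
    Mn (cylExt (k := k) f) θ = Mn f θ * (∑ x, θ x) ^ k := by
  rw [← Mn_one k θ, Mn, Mn, Mn, ← (Fin.appendEquiv n k).sum_comp, Fintype.sum_prod_type,
    Finset.sum_mul_sum]
  refine Finset.sum_congr rfl fun z₁ _ => Finset.sum_congr rfl fun z₂ _ => ?_
  have hcyl : cylExt (k := k) f (Fin.append z₁ z₂) = f z₁ :=
    congrArg f (funext (Fin.append_left z₁ z₂))
  change cylExt f (Fin.append z₁ z₂) * ∏ x, θ x ^ (countMap (n + k) (Fin.append z₁ z₂)).1 x = _
  simp only [hcyl, countMap_append, pow_add, Finset.prod_mul_distrib]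
  ring

lemma CoMnP_add {n : ℕ} (g₁ g₂ : CVec X n → ℝ) : CoMnP (g₁ + g₂) = CoMnP g₁ + CoMnP g₂ := by
  ext θ
  simp [CoMnP, CoMn, add_mul, Finset.sum_add_distrib]

lemma CoMnP_sub {n : ℕ} (g₁ g₂ : CVec X n → ℝ) : CoMnP (g₁ - g₂) = CoMnP g₁ - CoMnP g₂ := by
  ext θ
  simp [CoMnP, CoMn, sub_mul, Finset.sum_sub_distrib]

lemma CoMnP_const_mul {n : ℕ} (l : ℝ) (g : CVec X n → ℝ) :
    CoMnP (fun m => l * g m) = fun θ => l * CoMnP g θ := by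
  ext θ
  simp [CoMnP, CoMn, Finset.mul_sum, mul_assoc]

lemma MnP_eq_CoMnP_MuHy {n : ℕ} (f : (Fin n → X) → ℝ) : MnP f = CoMnP (MuHy f) :=
  funext fun θ => (CoMn_MuHy f θ.1).symm

end Polynomials

namespace LowerPrevCoherent

variable {Ω : Type*} [Fintype Ω] [Nonempty Ω] {P : (Ω → ℝ) → ℝ}

lemma map_zero (hP : LowerPrevCoherent P) : P 0 = 0 := by
  have h := hP.2.1 0 0 le_rfl
  simp only [Pi.zero_apply, zero_mul] at h
  exact h

lemma le_of_nonneg_sub (hP : LowerPrevCoherent P) {f g : Ω → ℝ} (h : 0 ≤ P (g - f)) :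
    P f ≤ P g := by
  have h' := hP.2.2 f (g - f)
  rw [add_sub_cancel] at h'
  linarith

lemma sum_nonneg (hP : LowerPrevCoherent P) {ι : Type*} (s : Finset ι) {h : ι → Ω → ℝ}
    (hh : ∀ i ∈ s, 0 ≤ P (h i)) : 0 ≤ P (∑ i ∈ s, h i) := by
  classical
  induction s using Finset.induction_on with
  | empty => simp [hP.map_zero]
  | insert a s ha ih =>
    rw [Finset.sum_insert ha]
    have hs := ih fun i hi => hh i (Finset.mem_insert_of_mem hi)
    linarith [hP.2.2 (h a) (∑ i ∈ s, h i), hh a (Finset.mem_insert_self a s)]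

end LowerPrevCoherent

lemma Exchangeable.nonneg_sub_comp {X : Type*} {n : ℕ} {P : ((Fin n → X) → ℝ) → ℝ}
    (hE : Exchangeable P) (f : (Fin n → X) → ℝ) (π : Equiv.Perm (Fin n)) :
    0 ≤ P (fun z => f z - f (z ∘ π)) := by
  simpa [Function.comp_def] using hE (fun z => f (z ∘ π)) π⁻¹

section Symmetrization

variable {X : Type*} [Fintype X] {n : ℕ}

lemma LowerPrevCoherent.eq_symmetrize [Nonempty X] {P : ((Fin n → X) → ℝ) → ℝ}
    (hP : LowerPrevCoherent P) (hE : Exchangeable P) (f : (Fin n → X) → ℝ) :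
    P f = P (fun z => (n.factorial : ℝ)⁻¹ * ∑ σ : Equiv.Perm (Fin n), f (z ∘ σ)) := by
  set c : ℝ := (n.factorial : ℝ)⁻¹
  have hc : 0 ≤ c := by positivity
  have hsum : ∑ _σ : Equiv.Perm (Fin n), c = 1 := by
    simp [c, Finset.card_univ, Fintype.card_perm, Nat.factorial_ne_zero]
  have hstep : ∀ g : (Fin n → X) → (Equiv.Perm (Fin n)) → ℝ, (∀ σ, 0 ≤ P (fun z => g z σ)) →
      0 ≤ P (∑ σ : Equiv.Perm (Fin n), fun z => c * g z σ) := fun g hg =>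
    hP.sum_nonneg _ fun σ _ => by rw [hP.2.1 _ c hc]; exact mul_nonneg hc (hg σ)
  refine le_antisymm (hP.le_of_nonneg_sub ((hstep _ (hE f)).trans_eq ?_))
    (hP.le_of_nonneg_sub ((hstep _ (hE.nonneg_sub_comp f)).trans_eq ?_))
  all_goals
    congr 1
    ext z
    simp only [Pi.sub_apply, Finset.sum_apply, mul_sub, Finset.sum_sub_distrib, ← Finset.sum_mul,
      hsum, one_mul, Finset.mul_sum, Function.comp_def]

variable [DecidableEq X]

lemma MuHy_countMap (f : (Fin n → X) → ℝ) (z : Fin n → X) :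
    MuHy f (countMap n z) = (n.factorial : ℝ)⁻¹ * ∑ σ : Equiv.Perm (Fin n), f (z ∘ σ) := by
  have hspec : ((∏ x, ((countMap n z).1 x).factorial : ℕ) : ℝ) * nu (countMap n z)
      = n.factorial := by exact_mod_cast nu_spec (countMap n z)
  have hν : (nu (countMap n z) : ℝ) ≠ 0 := Nat.cast_ne_zero.mpr (nu_pos _).ne'
  rw [sum_perm_comp, nsmul_eq_mul, MuHy, ← hspec]
  field_simp

lemma LowerPrevCoherent.eq_MuHy_comp_countMap [Nonempty X] {P : ((Fin n → X) → ℝ) → ℝ}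
    (hP : LowerPrevCoherent P) (hE : Exchangeable P) (f : (Fin n → X) → ℝ) :
    P f = P (fun z => MuHy f (countMap n z)) := by
  simp only [MuHy_countMap, ← hP.eq_symmetrize hE]

end Symmetrization

section Hypergeometric

variable {X : Type*} [Fintype X] [DecidableEq X] {n k : ℕ}

lemma card_append_fiber (z₁ : Fin n → X) (μ : CVec X (n + k)) :
    #{z₂ : Fin k → X | countMap (n + k) (Fin.append z₁ z₂) = μ} = nuSub μ (countMap n z₁) := by
  have happend : ∀ z₂ : Fin k → X, countMap (n + k) (Fin.append z₁ z₂) = μ ↔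
      ∀ x, (countMap n z₁).1 x + (countMap k z₂).1 x = μ.1 x := fun z₂ => by
    simp only [Subtype.ext_iff, funext_iff, countMap_append]
  by_cases hle : ∀ x, (countMap n z₁).1 x ≤ μ.1 x
  · have hρ : ∑ x, (μ.1 x - (countMap n z₁).1 x) = k := by
      rw [Finset.sum_tsub_distrib _ fun x _ => hle x, μ.2, (countMap n z₁).2,
        Nat.add_sub_cancel_left]
    rw [nuSub, if_pos hle]
    change _ = nu (⟨_, hρ⟩ : CVec X k)
    rw [← card_countMap_fiber]
    congr 1
    ext z₂
    simp only [Finset.mem_filter, Finset.mem_univ, true_and, happend, Subtype.ext_iff, funext_iff]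
    exact forall_congr' fun x => by have := hle x; omega
  · rw [nuSub, if_neg hle, Finset.card_eq_zero, Finset.filter_eq_empty_iff]
    exact fun z₂ _ he => hle fun x => by have := (happend z₂).mp he x; omega

lemma MuHy_cylExt_comp_countMap (g : CVec X n → ℝ) :
    MuHy (cylExt (k := k) fun z => g (countMap n z)) = gbar g := by
  ext μ
  have hsplit : ∑ z with countMap (n + k) z = μ, cylExt (k := k) (fun z => g (countMap n z)) z
      = ∑ z₁ : Fin n → X, (nuSub μ (countMap n z₁) : ℝ) * g (countMap n z₁) := by
    rw [Finset.sum_filter, ← (Fin.appendEquiv n k).sum_comp, Fintype.sum_prod_type]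
    refine Finset.sum_congr rfl fun z₁ _ => ?_
    have hcyl : ∀ z₂, cylExt (k := k) (fun z => g (countMap n z)) (Fin.append z₁ z₂)
        = g (countMap n z₁) := fun z₂ => congrArg (fun z => g (countMap n z))
          (funext (Fin.append_left z₁ z₂))
    simp only [Fin.appendEquiv, Equiv.coe_fn_mk, hcyl]
    rw [← Finset.sum_filter, Finset.sum_const, card_append_fiber, nsmul_eq_mul]
  rw [MuHy, hsplit, gbar, ← Finset.sum_fiberwise' Finset.univ (countMap n)
    (fun m => (nuSub μ m : ℝ) * g m), Finset.sum_div]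
  refine Finset.sum_congr rfl fun m _ => ?_
  rw [Finset.sum_const, card_countMap_fiber, nsmul_eq_mul]
  ring

lemma sum_gbar_weight (μ : CVec X (n + k)) :
    ∑ m : CVec X n, (nu m : ℝ) * nuSub μ m / nu μ = 1 := by
  have h := congrFun (MuHy_cylExt_comp_countMap (k := k) fun _ : CVec X n => (1 : ℝ)) μ
  simp only [gbar, mul_one] at h
  rw [← h, MuHy]
  have hν : (nu μ : ℝ) ≠ 0 := Nat.cast_ne_zero.mpr (nu_pos _).ne'
  simp [cylExt, card_countMap_fiber, hν]

end Hypergeometric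

section WeightBound

variable {X : Type*} [Fintype X] {n k : ℕ}

lemma Bern_nonneg {n : ℕ} (m : CVec X n) (θ : SimplexPt X) : 0 ≤ Bern m θ.1 :=
  mul_nonneg (Nat.cast_nonneg _) (Finset.prod_nonneg fun x _ => pow_nonneg (θ.2.1 x) _)

lemma nuSub_mul_descFactorial (μ : CVec X (n + k)) (m : CVec X n) (hle : ∀ x, m.1 x ≤ μ.1 x) :
    nuSub μ m * (n + k).descFactorial n = nu μ * ∏ x, (μ.1 x).descFactorial (m.1 x) := by
  have hρ : ∑ x, (μ.1 x - m.1 x) = k := by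
    rw [Finset.sum_tsub_distrib _ fun x _ => hle x, μ.2, m.2, Nat.add_sub_cancel_left]
  have hfac : 0 < ∏ x, (μ.1 x - m.1 x).factorial := Finset.prod_pos fun x _ => Nat.factorial_pos _
  refine Nat.eq_of_mul_eq_mul_left hfac ?_
  rw [nuSub, if_pos hle]
  calc (∏ x, (μ.1 x - m.1 x).factorial)
        * (Nat.multinomial Finset.univ (fun x => μ.1 x - m.1 x) * (n + k).descFactorial n)
      = ((n + k) - n).factorial * (n + k).descFactorial n := by
        rw [← mul_assoc, Nat.multinomial_spec, hρ, Nat.add_sub_cancel_left]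
    _ = (∏ x, (μ.1 x).factorial) * nu μ := by
        rw [Nat.factorial_mul_descFactorial (Nat.le_add_right n k), nu_spec]
    _ = (∏ x, (μ.1 x - m.1 x).factorial) * (nu μ * ∏ x, (μ.1 x).descFactorial (m.1 x)) := by
        rw [mul_left_comm, ← Finset.prod_mul_distrib]
        simp only [Nat.factorial_mul_descFactorial (hle _), mul_comm]

lemma nuSub_mul_descFactorial_le (μ : CVec X (n + k)) (m : CVec X n) :
    nuSub μ m * (n + k).descFactorial n ≤ nu μ * ∏ x, μ.1 x ^ m.1 x := by
  by_cases hle : ∀ x, m.1 x ≤ μ.1 x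
  · rw [nuSub_mul_descFactorial μ m hle]
    exact Nat.mul_le_mul_left _ (Finset.prod_le_prod' fun x _ => Nat.descFactorial_le_pow _ _)
  · simp [nuSub, hle]

lemma gbar_weight_le (hN : 0 < n + k) (μ : CVec X (n + k)) (m : CVec X n) :
    (nu m : ℝ) * nuSub μ m / nu μ
      ≤ ((n + k : ℕ) : ℝ) ^ n / (n + k).descFactorial n * Bern m (freqPt hN μ).1 := by
  have hN' : (0 : ℝ) < (n + k : ℕ) := by exact_mod_cast hN
  have hdesc : (0 : ℝ) < (n + k).descFactorial n :=
    Nat.cast_pos.mpr (Nat.descFactorial_pos.mpr (Nat.le_add_right n k))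
  have hν : (0 : ℝ) < nu μ := Nat.cast_pos.mpr (nu_pos μ)
  have hBern : Bern m (freqPt hN μ).1 = nu m * (∏ x, (μ.1 x : ℝ) ^ m.1 x) / (n + k : ℕ) ^ n := by
    have hpow : ((n + k : ℕ) : ℝ) ^ n = ∏ x, ((n + k : ℕ) : ℝ) ^ m.1 x := by
      rw [Finset.prod_pow_eq_pow_sum, m.2]
    rw [Bern, mul_div_assoc, hpow, ← Finset.prod_div_distrib]
    simp only [freqPt, div_pow]
  have hnat : (nuSub μ m * (n + k).descFactorial n : ℝ) ≤ nu μ * ∏ x, (μ.1 x : ℝ) ^ m.1 x := by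
    exact_mod_cast nuSub_mul_descFactorial_le μ m
  rw [hBern, div_mul_div_comm, div_le_div_iff₀ hν (by positivity)]
  have := mul_le_mul_of_nonneg_left hnat (by positivity : (0 : ℝ) ≤ nu m * (n + k : ℕ) ^ n)
  linarith

end WeightBound

section Representation

variable {X : Type*} [Fintype X] [DecidableEq X]

lemma CoMnP_gbar {n : ℕ} (k : ℕ) (g : CVec X n → ℝ) : CoMnP (gbar (k := k) g) = CoMnP g := by
  ext θ
  rw [CoMnP, CoMnP, ← MuHy_cylExt_comp_countMap, CoMn_MuHy, Mn_cylExt, Mn_comp_countMap, θ.2.2,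
    one_pow, mul_one]

lemma bddBelow_range_CoMnP {n : ℕ} (g : CVec X n → ℝ) : BddBelow (Set.range (CoMnP g)) := by
  obtain ⟨M, hM⟩ := Finite.bddBelow_range g
  refine ⟨M, ?_⟩
  rintro _ ⟨θ, rfl⟩
  calc M = ∑ m : CVec X n, M * Bern m θ.1 := by
        rw [← Finset.mul_sum, sum_Bern, θ.2.2, one_pow, mul_one]
    _ ≤ CoMnP g θ := Finset.sum_le_sum fun m _ =>
        mul_le_mul_of_nonneg_right (hM ⟨m, rfl⟩) (Bern_nonneg m θ)

lemma gbar_ge {n k : ℕ} (hN : 0 < n + k) (μ : CVec X (n + k)) {g : CVec X n → ℝ} {M : ℝ}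
    (hM : ∀ m, g m ≤ M) :
    ((n + k : ℕ) : ℝ) ^ n / (n + k).descFactorial n * CoMn g (freqPt hN μ).1
      - (((n + k : ℕ) : ℝ) ^ n / (n + k).descFactorial n - 1) * M ≤ gbar g μ :=
  le_sum_mul_of_le_mul (sum_gbar_weight μ) (by rw [sum_Bern, (freqPt hN μ).2.2, one_pow])
    (gbar_weight_le hN μ) hM

open Classical in
noncomputable def polyExt (P : ∀ n : ℕ, ((Fin n → X) → ℝ) → ℝ) (p : SimplexPt X → ℝ) : ℝ :=
  if hp : IsPolyGamble p then P hp.choose fun z => hp.choose_spec.2.choose (countMap _ z) else 0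

variable [Nonempty X] {P : ∀ n : ℕ, ((Fin n → X) → ℝ) → ℝ}

lemma P_comp_countMap_eq_gbar
    (hP : ∀ n : ℕ, 1 ≤ n → LowerPrevCoherent (P n) ∧ Exchangeable (P n))
    (htc : PTimeConsistent P) {n : ℕ} (hn : 1 ≤ n) (k : ℕ) (g : CVec X n → ℝ) :
    P n (fun z => g (countMap n z)) = P (n + k) (fun z => gbar g (countMap (n + k) z)) := by
  have hN : 1 ≤ n + k := by omega
  rw [htc n hn k, (hP _ hN).1.eq_MuHy_comp_countMap (hP _ hN).2, MuHy_cylExt_comp_countMap]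

lemma exists_degree_lift
    (hP : ∀ n : ℕ, 1 ≤ n → LowerPrevCoherent (P n) ∧ Exchangeable (P n))
    (htc : PTimeConsistent P) {n N : ℕ} (hn : 1 ≤ n) (hnN : n ≤ N) (g : CVec X n → ℝ) :
    ∃ h : CVec X N → ℝ, CoMnP h = CoMnP g ∧
      P n (fun z => g (countMap n z)) = P N (fun z => h (countMap N z)) := by
  obtain ⟨k, rfl⟩ := Nat.exists_eq_add_of_le hnN
  exact ⟨gbar g, CoMnP_gbar k g, P_comp_countMap_eq_gbar hP htc hn k g⟩

lemma le_P_comp_countMap_of_le_CoMnP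
    (hP : ∀ n : ℕ, 1 ≤ n → LowerPrevCoherent (P n) ∧ Exchangeable (P n))
    (htc : PTimeConsistent P) {n : ℕ} (hn : 1 ≤ n) (g : CVec X n → ℝ) {c : ℝ}
    (hc : ∀ θ, c ≤ CoMnP g θ) : c ≤ P n (fun z => g (countMap n z)) := by
  obtain ⟨M, hM⟩ := Finite.bddAbove_range g
  set A : ℕ → ℝ := fun k => ((n + k : ℕ) : ℝ) ^ n / (n + k).descFactorial n
  have hbound : ∀ k, A k * c - (A k - 1) * M ≤ P n (fun z => g (countMap n z)) := by
    intro k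
    have hN : 0 < n + k := by omega
    rw [P_comp_countMap_eq_gbar hP htc hn k]
    refine le_trans (le_csInf (Set.range_nonempty _) ?_) ((hP _ hN).1.1 _)
    rintro _ ⟨z, rfl⟩
    calc A k * c - (A k - 1) * M
        ≤ A k * CoMn g (freqPt hN (countMap _ z)).1 - (A k - 1) * M := by
          gcongr
          exact hc _
      _ ≤ gbar g (countMap _ z) := gbar_ge hN _ fun m => hM ⟨m, rfl⟩
  have hA := tendsto_pow_div_descFactorial n
  have hlim := (hA.mul_const c).sub ((hA.sub_const 1).mul_const M)
  rw [one_mul, sub_self, zero_mul, sub_zero] at hlim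
  exact le_of_tendsto' hlim hbound

lemma P_comp_countMap_mono
    (hP : ∀ n : ℕ, 1 ≤ n → LowerPrevCoherent (P n) ∧ Exchangeable (P n))
    (htc : PTimeConsistent P) {n : ℕ} (hn : 1 ≤ n) {g₁ g₂ : CVec X n → ℝ}
    (h : ∀ θ, CoMnP g₁ θ ≤ CoMnP g₂ θ) :
    P n (fun z => g₁ (countMap n z)) ≤ P n (fun z => g₂ (countMap n z)) :=
  (hP n hn).1.le_of_nonneg_sub <| le_P_comp_countMap_of_le_CoMnP hP htc hn (g₂ - g₁) fun θ => by
    rw [CoMnP_sub, Pi.sub_apply, sub_nonneg]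
    exact h θ

lemma P_comp_countMap_eq_of_CoMnP_eq
    (hP : ∀ n : ℕ, 1 ≤ n → LowerPrevCoherent (P n) ∧ Exchangeable (P n))
    (htc : PTimeConsistent P) {n₁ n₂ : ℕ} (hn₁ : 1 ≤ n₁) (hn₂ : 1 ≤ n₂)
    {g₁ : CVec X n₁ → ℝ} {g₂ : CVec X n₂ → ℝ} (h : CoMnP g₁ = CoMnP g₂) :
    P n₁ (fun z => g₁ (countMap n₁ z)) = P n₂ (fun z => g₂ (countMap n₂ z)) := by
  obtain ⟨h₁, hh₁, e₁⟩ := exists_degree_lift hP htc hn₁ (Nat.le_add_right n₁ n₂) g₁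
  obtain ⟨h₂, hh₂, e₂⟩ := exists_degree_lift hP htc hn₂ (Nat.le_add_left n₂ n₁) g₂
  have hN : 1 ≤ n₁ + n₂ := by omega
  have heq : CoMnP h₁ = CoMnP h₂ := by rw [hh₁, hh₂, h]
  rw [e₁, e₂]
  exact le_antisymm (P_comp_countMap_mono hP htc hN fun θ => (congrFun heq θ).le)
    (P_comp_countMap_mono hP htc hN fun θ => (congrFun heq θ).ge)

lemma polyExt_CoMnP
    (hP : ∀ n : ℕ, 1 ≤ n → LowerPrevCoherent (P n) ∧ Exchangeable (P n))
    (htc : PTimeConsistent P) {n : ℕ} (hn : 1 ≤ n) (g : CVec X n → ℝ) :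
    polyExt P (CoMnP g) = P n (fun z => g (countMap n z)) := by
  have hp : IsPolyGamble (CoMnP g) := ⟨n, hn, g, rfl⟩
  rw [polyExt, dif_pos hp]
  exact P_comp_countMap_eq_of_CoMnP_eq hP htc hp.choose_spec.1 hn
    hp.choose_spec.2.choose_spec.symm

lemma coherentOnPoly_polyExt
    (hP : ∀ n : ℕ, 1 ≤ n → LowerPrevCoherent (P n) ∧ Exchangeable (P n))
    (htc : PTimeConsistent P) : CoherentOnPoly (polyExt P) := by
  refine ⟨?_, ?_, ?_⟩
  · rintro _ ⟨n, hn, g, rfl⟩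
    rw [polyExt_CoMnP hP htc hn]
    exact le_P_comp_countMap_of_le_CoMnP hP htc hn g fun θ =>
      csInf_le (bddBelow_range_CoMnP g) ⟨θ, rfl⟩
  · rintro _ ⟨n, hn, g, rfl⟩ l hl
    rw [← CoMnP_const_mul, polyExt_CoMnP hP htc hn, polyExt_CoMnP hP htc hn]
    exact (hP n hn).1.2.1 _ l hl
  · rintro _ _ ⟨n₁, hn₁, g₁, rfl⟩ ⟨n₂, hn₂, g₂, rfl⟩
    obtain ⟨h₁, hh₁, -⟩ := exists_degree_lift hP htc hn₁ (Nat.le_add_right n₁ n₂) g₁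
    obtain ⟨h₂, hh₂, -⟩ := exists_degree_lift hP htc hn₂ (Nat.le_add_left n₂ n₁) g₂
    have hN : 1 ≤ n₁ + n₂ := by omega
    simp only [← hh₁, ← hh₂, ← CoMnP_add, polyExt_CoMnP hP htc hN]
    exact (hP _ hN).1.2.2 _ _

end Representation

/-- Representation theorem for exchangeable sequences: a time consistent
family of coherent exchangeable lower previsions has a unique coherent representing lower
prevision `S` on the polynomial gambles on the simplex, with `P^n(f) = S(Mn^n(f|·))` and
`Q^n(g) = S(CoMn^n(g|·))`. -/
theorem stmt11 {X : Type*} [Fintype X] [DecidableEq X] [Nonempty X]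
    (P : ∀ n : ℕ, ((Fin n → X) → ℝ) → ℝ)
    (hP : ∀ n : ℕ, 1 ≤ n → LowerPrevCoherent (P n) ∧ Exchangeable (P n))
    (htc : PTimeConsistent P)
    (Q : ∀ n : ℕ, (CVec X n → ℝ) → ℝ)
    (hQ : ∀ (n : ℕ) (h : CVec X n → ℝ), Q n h = P n (fun z => h (countMap n z))) :
    ∃ S : (SimplexPt X → ℝ) → ℝ,
      (CoherentOnPoly S ∧
        ∀ n : ℕ, 1 ≤ n →
          (∀ f : (Fin n → X) → ℝ, P n f = S (MnP f)) ∧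
          (∀ g : CVec X n → ℝ, Q n g = S (CoMnP g))) ∧
      ∀ S' : (SimplexPt X → ℝ) → ℝ,
        (CoherentOnPoly S' ∧
          ∀ n : ℕ, 1 ≤ n →
            (∀ f : (Fin n → X) → ℝ, P n f = S' (MnP f)) ∧
            (∀ g : CVec X n → ℝ, Q n g = S' (CoMnP g))) →
        ∀ p : SimplexPt X → ℝ, IsPolyGamble p → S' p = S p := by
  obtain rfl : Q = fun n h => P n (fun z => h (countMap n z)) := funext fun n => funext (hQ n)
  refine ⟨polyExt P, ⟨coherentOnPoly_polyExt hP htc, fun n hn => ⟨fun f => ?_, fun g => ?_⟩⟩, ?_⟩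
  · rw [MnP_eq_CoMnP_MuHy, polyExt_CoMnP hP htc hn]
    exact (hP n hn).1.eq_MuHy_comp_countMap (hP n hn).2 f
  · exact (polyExt_CoMnP hP htc hn g).symm
  · rintro S' ⟨-, hS'⟩ _ ⟨n, hn, g, rfl⟩
    rw [← (hS' n hn).2 g, polyExt_CoMnP hP htc hn]
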